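/- Let u:(0,∞)→(0,∞) be non-increasing and satisfy u(t) ≤ C t^{−1} φ(t^{−1})^{−1} for all t > 0, where φ:(0,∞)→(0,∞) is increasing. If d ≥ 3, then the function g(r) = ∫₀^∞ (4πt)^{−d/2} e^{−r²/(4t)} u(t) dt satisfies g(r) ≤ c r^{−d} φ(r^{−2})^{−1} for all r > 0, for some c = c(d, C) > 0. -/

import Mathlib

/-!
Split the time integral at `t = r²`. For `t ≤ r²` the monotonicity of `φ` gives
`u t ≤ C φ(r⁻²)⁻¹ t⁻¹`, and `e^{-x} ≤ d! x^{-d}` turns the Gaussian factor into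
`t^{d/2}`, leaving the integrable power `t^{d/2-1}` near `0`. For `t > r²` the monotonicity
of `u` gives `u t ≤ u(r²) ≤ C r⁻² φ(r⁻²)⁻¹`, and `∫_{r²}^∞ t^{-d/2} dt` converges because
`d ≥ 3`. Both pieces scale like `r^{-d} φ(r⁻²)⁻¹`.
-/

open MeasureTheory Real Set

theorem Real.exp_neg_le_factorial_div_pow (n : ℕ) {x : ℝ} (hx : 0 < x) :
    exp (-x) ≤ n.factorial / x ^ n := by
  rw [exp_neg, inv_le_comm₀ (exp_pos x) (by positivity), inv_div]
  exact pow_div_factorial_le_exp _ hx.le n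

theorem lintegral_Ioc_zero_rpow {R s : ℝ} (hR : 0 < R) (hs : -1 < s) :
    ∫⁻ t in Ioc 0 R, ENNReal.ofReal (t ^ s) = ENNReal.ofReal (R ^ (s + 1) / (s + 1)) := by
  have hint : IntegrableOn (fun t : ℝ ↦ t ^ s) (Ioc 0 R) :=
    (intervalIntegrable_iff_integrableOn_Ioc_of_le hR.le).mp
      (intervalIntegral.intervalIntegrable_rpow' hs)
  rw [← ofReal_integral_eq_lintegral_ofReal hint
    ((ae_restrict_mem measurableSet_Ioc).mono fun t ht ↦ rpow_nonneg ht.1.le s),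
    ← intervalIntegral.integral_of_le hR.le, integral_rpow (Or.inl hs),
    zero_rpow (by linarith), sub_zero]

theorem lintegral_Ioi_rpow {R s : ℝ} (hR : 0 < R) (hs : s < -1) :
    ∫⁻ t in Ioi R, ENNReal.ofReal (t ^ s) = ENNReal.ofReal (-R ^ (s + 1) / (s + 1)) := by
  rw [← ofReal_integral_eq_lintegral_ofReal (integrableOn_Ioi_rpow_of_lt hs hR)
    ((ae_restrict_mem measurableSet_Ioi).mono fun t ht ↦ rpow_nonneg (hR.trans ht).le s),
    integral_Ioi_rpow_of_lt hs hR]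

theorem lintegral_Ioi_zero_le_of_le_rpow {f : ℝ → ENNReal} {R a b s q : ℝ} (hR : 0 < R)
    (hs : -1 < s) (hq : q < -1) (ha : 0 ≤ a) (hb : 0 ≤ b)
    (hnear : ∀ t ∈ Ioc 0 R, f t ≤ ENNReal.ofReal (a * t ^ s))
    (hfar : ∀ t ∈ Ioi R, f t ≤ ENNReal.ofReal (b * t ^ q)) :
    ∫⁻ t in Ioi 0, f t
      ≤ ENNReal.ofReal (a * (R ^ (s + 1) / (s + 1)) + b * (-R ^ (q + 1) / (q + 1))) := by
  have hq' : 0 ≤ -R ^ (q + 1) / (q + 1) :=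
    div_nonneg_of_nonpos (neg_nonpos.mpr (rpow_nonneg hR.le _)) (by linarith)
  rw [← Ioc_union_Ioi_eq_Ioi hR.le, lintegral_union measurableSet_Ioi (Ioc_disjoint_Ioi le_rfl),
    ENNReal.ofReal_add (mul_nonneg ha (div_nonneg (rpow_nonneg hR.le _) (by linarith)))
      (mul_nonneg hb hq'),
    ENNReal.ofReal_mul ha, ENNReal.ofReal_mul hb, ← lintegral_Ioc_zero_rpow hR hs,
    ← lintegral_Ioi_rpow hR hq, ← lintegral_const_mul' _ _ ENNReal.ofReal_ne_top,
    ← lintegral_const_mul' _ _ ENNReal.ofReal_ne_top]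
  refine add_le_add (setLIntegral_mono' measurableSet_Ioc fun t ht ↦ ?_)
    (setLIntegral_mono' measurableSet_Ioi fun t ht ↦ ?_)
  · rw [← ENNReal.ofReal_mul ha]; exact hnear t ht
  · rw [← ENNReal.ofReal_mul hb]; exact hfar t ht

noncomputable def heatKernel (d : ℕ) (r t : ℝ) : ℝ :=
  (4 * π * t) ^ (-(d : ℝ) / 2) * exp (-(r ^ 2 / (4 * t)))

theorem heatKernel_nonneg (d : ℕ) (r : ℝ) {t : ℝ} (ht : 0 ≤ t) : 0 ≤ heatKernel d r t := by
  unfold heatKernel; positivity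

theorem heatKernel_eq {d : ℕ} {r t : ℝ} (ht : 0 < t) :
    heatKernel d r t
      = (4 * π) ^ (-(d : ℝ) / 2) * t ^ (-(d : ℝ) / 2) * exp (-(r ^ 2 / (4 * t))) := by
  rw [heatKernel, mul_rpow (by positivity) ht.le]

theorem heatKernel_le (d : ℕ) (r : ℝ) {t : ℝ} (ht : 0 < t) :
    heatKernel d r t ≤ (4 * π) ^ (-(d : ℝ) / 2) * t ^ (-(d : ℝ) / 2) := by
  rw [heatKernel_eq ht]
  exact mul_le_of_le_one_right (by positivity) (exp_le_one_iff.mpr (neg_nonpos.mpr (by positivity)))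

theorem heatKernel_le_factorial (d n : ℕ) {r t : ℝ} (hr : 0 < r) (ht : 0 < t) :
    heatKernel d r t
      ≤ (4 * π) ^ (-(d : ℝ) / 2) * (n.factorial * 4 ^ n * (r ^ 2) ^ (-(n : ℝ)))
        * t ^ ((n : ℝ) - d / 2) := by
  have hexp :
      exp (-(r ^ 2 / (4 * t))) ≤ n.factorial * 4 ^ n * (r ^ 2) ^ (-(n : ℝ)) * t ^ (n : ℝ) := by
    refine (exp_neg_le_factorial_div_pow n (by positivity)).trans_eq ?_
    rw [rpow_neg (by positivity), rpow_natCast, rpow_natCast, div_pow, mul_pow]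
    field_simp
  have hpow : t ^ ((n : ℝ) - d / 2) = t ^ (-(d : ℝ) / 2) * t ^ (n : ℝ) := by
    rw [← rpow_add ht]; ring_nf
  rw [heatKernel_eq ht, hpow]
  calc _ ≤ (4 * π) ^ (-(d : ℝ) / 2) * t ^ (-(d : ℝ) / 2)
          * (n.factorial * 4 ^ n * (r ^ 2) ^ (-(n : ℝ)) * t ^ (n : ℝ)) :=
        mul_le_mul_of_nonneg_left hexp (by positivity)
    _ = _ := by ring

theorem heatKernel_mul_le_of_le_mul_inv (d n : ℕ) {r t u M : ℝ} (hr : 0 < r) (ht : 0 < t)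
    (hM : 0 ≤ M) (hu : u ≤ M * t⁻¹) :
    heatKernel d r t * u
      ≤ (4 * π) ^ (-(d : ℝ) / 2) * (n.factorial * 4 ^ n * (r ^ 2) ^ (-(n : ℝ))) * M
        * t ^ ((n : ℝ) - d / 2 - 1) := by
  calc heatKernel d r t * u ≤ heatKernel d r t * (M * t⁻¹) :=
        mul_le_mul_of_nonneg_left hu (heatKernel_nonneg d r ht.le)
    _ ≤ ((4 * π) ^ (-(d : ℝ) / 2) * (n.factorial * 4 ^ n * (r ^ 2) ^ (-(n : ℝ)))
          * t ^ ((n : ℝ) - d / 2)) * (M * t⁻¹) := by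
        gcongr; exact heatKernel_le_factorial d n hr ht
    _ = _ := by rw [rpow_sub_one ht.ne']; ring

theorem heatKernel_mul_le_of_le (d : ℕ) (r : ℝ) {t u M : ℝ} (ht : 0 < t) (hM : 0 ≤ M)
    (hu : u ≤ M) :
    heatKernel d r t * u ≤ (4 * π) ^ (-(d : ℝ) / 2) * M * t ^ (-(d : ℝ) / 2) := by
  calc heatKernel d r t * u ≤ heatKernel d r t * M :=
        mul_le_mul_of_nonneg_left hu (heatKernel_nonneg d r ht.le)
    _ ≤ (4 * π) ^ (-(d : ℝ) / 2) * t ^ (-(d : ℝ) / 2) * M := by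
        gcongr; exact heatKernel_le d r ht
    _ = _ := by ring

/-- The two summands come from the integrals over `t ≤ r²` and `t > r²` respectively. -/
noncomputable def greenConst (d : ℕ) : ℝ :=
  (4 * π) ^ (-(d : ℝ) / 2) * (d.factorial * 4 ^ d / (d / 2) + 1 / (d / 2 - 1))

theorem greenConst_pos {d : ℕ} (hd : 2 < d) : 0 < greenConst d := by
  have : (0 : ℝ) < d / 2 - 1 := by
    have : (2 : ℝ) < d := by exact_mod_cast hd
    linarith
  unfold greenConst
  positivity

theorem lintegral_heatKernel_mul_le {d : ℕ} (hd : 2 < d) {u : ℝ → ℝ} {M r : ℝ} (hr : 0 < r)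
    (hM : 0 ≤ M) (hnear : ∀ t ∈ Ioc 0 (r ^ 2), u t ≤ M * t⁻¹)
    (hfar : ∀ t ∈ Ioi (r ^ 2), u t ≤ M * (r ^ 2)⁻¹) :
    ∫⁻ t in Ioi 0, ENNReal.ofReal (heatKernel d r t * u t)
      ≤ ENNReal.ofReal (greenConst d * M * r ^ (-(d : ℝ))) := by
  have hd' : (2 : ℝ) < d := by exact_mod_cast hd
  set R := r ^ 2 with hR
  have hR0 : 0 < R := by positivity
  refine (lintegral_Ioi_zero_le_of_le_rpow hR0 (by linarith) (by linarith) (by positivity)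
    (by positivity)
    (fun t ht ↦ ENNReal.ofReal_le_ofReal
      (heatKernel_mul_le_of_le_mul_inv d d hr ht.1 hM (hnear t ht)))
    (fun t ht ↦ ENNReal.ofReal_le_ofReal
      (heatKernel_mul_le_of_le d r (hR0.trans ht) (by positivity) (hfar t ht)))).trans_eq ?_
  have hRd : R ^ (-(d : ℝ) / 2) = r ^ (-(d : ℝ)) := by
    rw [hR, ← rpow_natCast, ← rpow_mul hr.le]; push_cast; ring_nf
  have hnear_pow : R ^ (-(d : ℝ)) * R ^ ((d : ℝ) / 2) = r ^ (-(d : ℝ)) := by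
    rw [← rpow_add hR0, ← hRd]; ring_nf
  have hfar_pow : R⁻¹ * R ^ (-((d : ℝ) / 2 - 1)) = r ^ (-(d : ℝ)) := by
    rw [← rpow_neg_one, ← rpow_add hR0, ← hRd]; ring_nf
  congr 1
  rw [greenConst, ← hR, show (d : ℝ) - d / 2 - 1 + 1 = d / 2 by ring,
    show -(d : ℝ) / 2 + 1 = -(d / 2 - 1) by ring, neg_div_neg_eq]
  linear_combination ((4 * π) ^ (-(d : ℝ) / 2) * d.factorial * 4 ^ d * M / (d / 2)) * hnear_pow
    + ((4 * π) ^ (-(d : ℝ) / 2) * M / (d / 2 - 1)) * hfar_pow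

theorem green_function_upper_bound_general
    (d : ℕ) (hd : 3 ≤ d) (u φ : ℝ → ℝ) (C : ℝ) (hC : 0 < C)
    (hφpos : ∀ x > 0, 0 < φ x)
    (hφmono : ∀ x y : ℝ, 0 < x → x ≤ y → φ x ≤ φ y)
    (humono : ∀ s t : ℝ, 0 < s → s ≤ t → u t ≤ u s)
    (huub : ∀ t > 0, u t ≤ C * t⁻¹ * (φ t⁻¹)⁻¹) :
    ∃ c > 0, ∀ r > 0,
      (∫⁻ t in Set.Ioi (0:ℝ),
        ENNReal.ofReal ((4 * Real.pi * t) ^ (-(d:ℝ)/2) * Real.exp (-(r^2 / (4*t))) * u t))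
      ≤ ENNReal.ofReal (c * r ^ (-(d:ℝ)) * (φ ((r^2)⁻¹))⁻¹) := by
  refine ⟨C * greenConst d, mul_pos hC (greenConst_pos hd), fun r hr ↦ ?_⟩
  have hRinv : 0 < (r ^ 2)⁻¹ := by positivity
  have hφR := hφpos _ hRinv
  have hnear : ∀ t ∈ Ioc 0 (r ^ 2), u t ≤ C * (φ (r ^ 2)⁻¹)⁻¹ * t⁻¹ := fun t ⟨ht, htr⟩ ↦
    calc u t ≤ C * t⁻¹ * (φ t⁻¹)⁻¹ := huub t ht
      _ ≤ C * t⁻¹ * (φ (r ^ 2)⁻¹)⁻¹ :=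
        mul_le_mul_of_nonneg_left (inv_anti₀ hφR (hφmono _ _ hRinv (inv_anti₀ ht htr)))
          (by positivity)
      _ = _ := by ring
  have hfar : ∀ t ∈ Ioi (r ^ 2), u t ≤ C * (φ (r ^ 2)⁻¹)⁻¹ * (r ^ 2)⁻¹ := fun t ht ↦
    calc u t ≤ u (r ^ 2) := humono _ t (by positivity) ht.le
      _ ≤ C * (r ^ 2)⁻¹ * (φ (r ^ 2)⁻¹)⁻¹ := huub _ (by positivity)
      _ = _ := by ring
  refine (lintegral_heatKernel_mul_le hd hr (by positivity) hnear hfar).trans_eq ?_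
  congr 1
  ring

/-- Upper bound for the Green function of a subordinate Brownian motion, d ≥ 3. -/
theorem green_function_upper_bound
    (d : ℕ) (hd : 3 ≤ d) (u φ : ℝ → ℝ) (C : ℝ) (hC : 0 < C)
    (hφpos : ∀ x > 0, 0 < φ x)
    (hφmono : ∀ x y : ℝ, 0 < x → x ≤ y → φ x ≤ φ y)
    (hupos : ∀ t > 0, 0 < u t)
    (humono : ∀ s t : ℝ, 0 < s → s ≤ t → u t ≤ u s)
    (huub : ∀ t > 0, u t ≤ C * t⁻¹ * (φ t⁻¹)⁻¹) :
    ∃ c > 0, ∀ r > 0,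
      (∫⁻ t in Set.Ioi (0:ℝ),
        ENNReal.ofReal ((4 * Real.pi * t) ^ (-(d:ℝ)/2) * Real.exp (-(r^2 / (4*t))) * u t))
      ≤ ENNReal.ofReal (c * r ^ (-(d:ℝ)) * (φ ((r^2)⁻¹))⁻¹) :=
  green_function_upper_bound_general d hd u φ C hC hφpos hφmono humono huub
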